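/- If X is a quasiregular space, then d(X) ≤ πχ(X)^(c(X)), i.e., X has a dense subset of cardinality at most πχ(X) raised to the power c(X). -/

import Mathlib

open Cardinal Set TopologicalSpace

universe u

/-- The density of a space: the least cardinality of a dense subset. -/
noncomputable def dens (X : Type u) [TopologicalSpace X] : Cardinal.{u} :=
  sInf {c : Cardinal.{u} | ∃ D : Set X, Dense D ∧ #D = c}

/-- A local π-base at a point: a family of nonempty open sets such that every
open set containing the point contains a member of the family. -/
def IsLocalPiBase (X : Type u) [TopologicalSpace X] (x : X) (𝒱 : Set (Set X)) : Prop :=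
  (∀ V ∈ 𝒱, IsOpen V ∧ V.Nonempty) ∧
    ∀ U : Set X, IsOpen U → x ∈ U → ∃ V ∈ 𝒱, V ⊆ U

/-- The π-character at a point: the least infinite cardinality of a local π-base. -/
noncomputable def piCharPoint (X : Type u) [TopologicalSpace X] (x : X) : Cardinal.{u} :=
  sInf {κ : Cardinal.{u} | ℵ₀ ≤ κ ∧ ∃ 𝒱 : Set (Set X), IsLocalPiBase X x 𝒱 ∧ #𝒱 ≤ κ}

/-- The π-character of a space. -/
noncomputable def piChar (X : Type u) [TopologicalSpace X] : Cardinal.{u} :=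
  ⨆ x : X, piCharPoint X x

/-- A π-base for a space. -/
def IsPiBase (X : Type u) [TopologicalSpace X] (𝒱 : Set (Set X)) : Prop :=
  (∀ V ∈ 𝒱, IsOpen V ∧ V.Nonempty) ∧
    ∀ U : Set X, IsOpen U → U.Nonempty → ∃ V ∈ 𝒱, V ⊆ U

/-- The π-weight of a space: the least infinite cardinality of a π-base. -/
noncomputable def piWeight (X : Type u) [TopologicalSpace X] : Cardinal.{u} :=
  sInf {κ : Cardinal.{u} | ℵ₀ ≤ κ ∧ ∃ 𝒱 : Set (Set X), IsPiBase X 𝒱 ∧ #𝒱 ≤ κ}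

/-- The cellularity of a space: the least infinite cardinal bounding the size of
every pairwise disjoint family of nonempty open sets. -/
noncomputable def cellularity (X : Type u) [TopologicalSpace X] : Cardinal.{u} :=
  sInf {κ : Cardinal.{u} | ℵ₀ ≤ κ ∧ ∀ 𝒞 : Set (Set X),
    (∀ U ∈ 𝒞, IsOpen U ∧ U.Nonempty) → 𝒞.PairwiseDisjoint id → #𝒞 ≤ κ}

/-- The set of infinite cardinals κ witnessing the nonquasiregularity degree:
every nonempty open set U contains a nonempty set ⋂₀ 𝒱 with 𝒱 an open family of
size at most κ and ⋂_{V ∈ 𝒱} cl V ⊆ U. -/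
def nqSet (X : Type u) [TopologicalSpace X] : Set Cardinal.{u} :=
  {κ : Cardinal.{u} | ℵ₀ ≤ κ ∧ ∀ U : Set X, IsOpen U → U.Nonempty →
    ∃ 𝒱 : Set (Set X), (∀ V ∈ 𝒱, IsOpen V) ∧ #𝒱 ≤ κ ∧
      (⋂₀ 𝒱).Nonempty ∧ (⋂ V ∈ 𝒱, closure V) ⊆ U}

/-- A space is an nq-space if its nonquasiregularity degree is defined. -/
def IsNqSpace (X : Type u) [TopologicalSpace X] : Prop :=
  (nqSet X).Nonempty

/-- The nonquasiregularity degree of a space. -/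
noncomputable def nq (X : Type u) [TopologicalSpace X] : Cardinal.{u} :=
  sInf (nqSet X)

/-- The closed pseudocharacter at a point. -/
noncomputable def psiCPoint (X : Type u) [TopologicalSpace X] (x : X) : Cardinal.{u} :=
  sInf {κ : Cardinal.{u} | ℵ₀ ≤ κ ∧ ∃ 𝒱 : Set (Set X),
    (∀ V ∈ 𝒱, IsOpen V ∧ x ∈ V) ∧ #𝒱 ≤ κ ∧ (⋂ V ∈ 𝒱, closure V) = {x}}

/-- The closed pseudocharacter of a space. -/
noncomputable def psiC (X : Type u) [TopologicalSpace X] : Cardinal.{u} :=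
  sInf {κ : Cardinal.{u} | ℵ₀ ≤ κ ∧ ∀ x : X, ∃ 𝒱 : Set (Set X),
    (∀ V ∈ 𝒱, IsOpen V ∧ x ∈ V) ∧ #𝒱 ≤ κ ∧ (⋂ V ∈ 𝒱, closure V) = {x}}

/-- The dense closed pseudocharacter of a space. -/
noncomputable def dPsiC (X : Type u) [TopologicalSpace X] : Cardinal.{u} :=
  sInf {κ : Cardinal.{u} | ℵ₀ ≤ κ ∧ ∃ D : Set X, Dense D ∧ ∀ d ∈ D, psiCPoint X d ≤ κ}

/-- The weak closed pseudocharacter at a point: the least infinite cardinality of a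
family 𝒱 of open sets with ⋂_{V ∈ 𝒱} cl V = {x}. -/
noncomputable def wPsiCPoint (X : Type u) [TopologicalSpace X] (x : X) : Cardinal.{u} :=
  sInf {κ : Cardinal.{u} | ℵ₀ ≤ κ ∧ ∃ 𝒱 : Set (Set X),
    (∀ V ∈ 𝒱, IsOpen V) ∧ #𝒱 ≤ κ ∧ (⋂ V ∈ 𝒱, closure V) = {x}}

/-- The weak closed pseudocharacter of a space. -/
noncomputable def wPsiC (X : Type u) [TopologicalSpace X] : Cardinal.{u} :=
  ⨆ x : X, wPsiCPoint X x

/-- The pseudocharacter of a space: the least infinite cardinal κ such that every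
point is the intersection of at most κ open sets. -/
noncomputable def psi (X : Type u) [TopologicalSpace X] : Cardinal.{u} :=
  sInf {κ : Cardinal.{u} | ℵ₀ ≤ κ ∧ ∀ x : X, ∃ 𝒱 : Set (Set X),
    (∀ V ∈ 𝒱, IsOpen V) ∧ #𝒱 ≤ κ ∧ ⋂₀ 𝒱 = {x}}

/-- The Lindelöf degree of a space. -/
noncomputable def lindelofDegree (X : Type u) [TopologicalSpace X] : Cardinal.{u} :=
  sInf {κ : Cardinal.{u} | ℵ₀ ≤ κ ∧ ∀ 𝒰 : Set (Set X), (∀ U ∈ 𝒰, IsOpen U) →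
    ⋃₀ 𝒰 = Set.univ → ∃ 𝒱 ⊆ 𝒰, #𝒱 ≤ κ ∧ ⋃₀ 𝒱 = Set.univ}

/-- The cardinality of the collection of regular open subsets of a space. -/
noncomputable def cardRO (X : Type u) [TopologicalSpace X] : Cardinal.{u} :=
  #{R : Set X | R = interior (closure R)}

/-- A space is quasiregular if every nonempty open set contains a nonempty open
set whose closure is contained in it. -/
def Quasiregular (X : Type u) [TopologicalSpace X] : Prop :=
  ∀ U : Set X, IsOpen U → U.Nonempty →
    ∃ V : Set X, IsOpen V ∧ V.Nonempty ∧ closure V ⊆ U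

/-!
Fix local π-bases `𝒱 x` of size at most `κ = πχ(X)` and let `τ = c(X)`. A closure argument
gives a set `D` of size at most `κ ^ τ` such that whenever `𝒢` is a family of at most `τ`
members of the `𝒱 d`, `d ∈ D`, whose union is not dense, some point of `D` lies outside
`closure (⋃₀ 𝒢)`. Such a `D` is dense: otherwise quasiregularity gives a nonempty open `V` with
`closure V` disjoint from `closure D`. A maximal disjoint family `𝒢` of members of the `𝒱 d`
missing `closure V` has at most `τ` members and `V` misses `closure (⋃₀ 𝒢)`, so some `d ∈ D`
avoids `closure (⋃₀ 𝒢) ∪ closure V`; a member of `𝒱 d` inside the complement of this set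
could be added to `𝒢`, contradicting maximality.
-/

theorem exists_closedUnder_mk_le {Q N X : Type u} (op : (Q → X) → N → X) (x₀ : X)
    {μ : Cardinal.{u}} (hμ : ℵ₀ ≤ μ) (hN : #N ≤ μ) (hQ : μ ^ #Q ≤ μ) :
    ∃ D : Set X, x₀ ∈ D ∧ #D ≤ μ ∧ ∀ xs : Q → X, (∀ i, xs i ∈ D) → ∀ n, op xs n ∈ D := by
  -- `D` is the image of the well-founded trees whose leaves are `x₀` and whose nodes apply `op`.
  let β : Option N → Type u := fun o => o.elim PEmpty fun _ => Q
  let eval : WType β → X := WType.elim X fun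
    | ⟨none, _⟩ => x₀
    | ⟨some n, xs⟩ => op xs n
  refine ⟨range eval, ⟨WType.mk none PEmpty.elim, rfl⟩, ?_, fun xs hxs n => ?_⟩
  · refine mk_range_le.trans (WType.cardinalMk_le_of_le ?_)
    calc sum (fun o => μ ^ #(β o)) ≤ sum fun _ : Option N => μ := by
          refine sum_le_sum _ _ fun o => ?_
          cases o with
          | none => simpa [β] using one_le_aleph0.trans hμ
          | some n => exact hQ
      _ = (#N + 1) * μ := by rw [sum_const', mk_option]
      _ ≤ (μ + 1) * μ := by gcongr
      _ = μ := by rw [add_one_eq hμ, mul_eq_self hμ]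
  · choose w hw using hxs
    exact ⟨WType.mk (some n) w, congrArg (op · n) (funext hw)⟩

theorem Set.Nonempty.exists_range_eq_of_mk_le {α β : Type u} {s : Set α} (hs : s.Nonempty)
    (h : #s ≤ #β) : ∃ f : β → α, range f = s := by
  obtain ⟨g⟩ := h
  have : Nonempty s := hs.to_subtype
  refine ⟨(↑) ∘ Function.invFun g, ?_⟩
  rw [range_comp, (Function.invFun_surjective g.injective).range_eq, image_univ,
    Subtype.range_coe]

theorem exists_mk_le_power_forall_inter_nonempty {X : Type u} [Nonempty X] {κ τ : Cardinal.{u}}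
    (hκ : ℵ₀ ≤ κ) (hτ : ℵ₀ ≤ τ) (𝒱 : X → Set (Set X)) (h𝒱ne : ∀ x, (𝒱 x).Nonempty)
    (h𝒱 : ∀ x, #(𝒱 x) ≤ κ) (T : Set (Set X) → Set X) :
    ∃ D : Set X, #D ≤ κ ^ τ ∧
      ∀ 𝒢 ⊆ ⋃ x ∈ D, 𝒱 x, #𝒢 ≤ τ → (T 𝒢).Nonempty → (D ∩ T 𝒢).Nonempty := by
  have hpick (𝒢 : Set (Set X)) : ∃ x, (T 𝒢).Nonempty → x ∈ T 𝒢 := by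
    by_cases h : (T 𝒢).Nonempty
    exacts [⟨h.some, fun _ => h.some_mem⟩, ⟨Classical.arbitrary X, fun h' => (h h').elim⟩]
  choose pick hpick using hpick
  choose e he using fun x =>
    (h𝒱ne x).exists_range_eq_of_mk_le (β := κ.out) (by rw [mk_out]; exact h𝒱 x)
  obtain ⟨D, hD₀, hDcard, hD⟩ := exists_closedUnder_mk_le (Q := τ.out) (N := τ.out → κ.out)
    (fun xs k => pick (range fun i => e (xs i) (k i))) (pick ∅)
    (hκ.trans (self_le_power κ (one_le_aleph0.trans hτ))) (by simp [mk_out])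
    (by rw [mk_out, ← power_mul, mul_eq_self hτ])
  refine ⟨D, hDcard, fun 𝒢 h𝒢 h𝒢τ hT => ?_⟩
  rcases 𝒢.eq_empty_or_nonempty with rfl | h𝒢ne
  · exact ⟨pick ∅, hD₀, hpick ∅ hT⟩
  obtain ⟨f, rfl⟩ := h𝒢ne.exists_range_eq_of_mk_le (β := τ.out) (by rwa [mk_out])
  have hf (i : τ.out) : ∃ x ∈ D, ∃ k, e x k = f i := by
    obtain ⟨x, hx, hfx⟩ := mem_iUnion₂.1 (h𝒢 (mem_range_self i))
    exact ⟨x, hx, by rwa [← he x] at hfx⟩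
  choose xs hxs k hk using hf
  refine ⟨pick (range f), ?_, hpick _ hT⟩
  simpa only [hk] using hD xs hxs k

theorem Set.exists_maximal_pairwiseDisjoint_subset {ι α : Type*} [PartialOrder α] [OrderBot α]
    (s : Set ι) (f : ι → α) : ∃ t, Maximal (fun t => t ⊆ s ∧ t.PairwiseDisjoint f) t :=
  zorn_subset _ fun c hcs hc => ⟨⋃₀ c, ⟨sUnion_subset fun _ ht => (hcs ht).1,
    (hc.pairwiseDisjoint_sUnion f).2 fun _ ht => (hcs ht).2⟩, fun _ => subset_sUnion_of_mem⟩

section Topology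

variable {X : Type u} [TopologicalSpace X]

theorem dens_le_mk {D : Set X} (hD : Dense D) : dens X ≤ #D :=
  csInf_le' ⟨D, hD, rfl⟩

theorem IsLocalPiBase.nonempty {x : X} {𝒱 : Set (Set X)} (h : IsLocalPiBase X x 𝒱) :
    𝒱.Nonempty :=
  let ⟨V, hV, _⟩ := h.2 univ isOpen_univ (mem_univ x)
  ⟨V, hV⟩

theorem piCharPoint_spec (x : X) :
    ℵ₀ ≤ piCharPoint X x ∧ ∃ 𝒱, IsLocalPiBase X x 𝒱 ∧ #𝒱 ≤ piCharPoint X x := by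
  have hopen : IsLocalPiBase X x {V | IsOpen V ∧ V.Nonempty} :=
    ⟨fun _ hV => hV, fun U hU hxU => ⟨U, ⟨hU, x, hxU⟩, subset_rfl⟩⟩
  exact csInf_mem (s := {κ | ℵ₀ ≤ κ ∧ ∃ 𝒱, IsLocalPiBase X x 𝒱 ∧ #𝒱 ≤ κ})
    ⟨_, le_max_left ℵ₀ _, _, hopen, le_max_right _ _⟩

theorem piCharPoint_le_piChar (x : X) : piCharPoint X x ≤ piChar X :=
  le_ciSup bddAbove_of_small x

theorem aleph0_le_piChar [Nonempty X] : ℵ₀ ≤ piChar X :=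
  (piCharPoint_spec (Classical.arbitrary X)).1.trans (piCharPoint_le_piChar _)

theorem exists_isLocalPiBase_mk_le_piChar (x : X) :
    ∃ 𝒱, IsLocalPiBase X x 𝒱 ∧ #𝒱 ≤ piChar X :=
  let ⟨𝒱, h𝒱, h𝒱card⟩ := (piCharPoint_spec x).2
  ⟨𝒱, h𝒱, h𝒱card.trans (piCharPoint_le_piChar x)⟩

theorem cellularity_spec : ℵ₀ ≤ cellularity X ∧ ∀ 𝒞 : Set (Set X),
    (∀ U ∈ 𝒞, IsOpen U ∧ U.Nonempty) → 𝒞.PairwiseDisjoint id → #𝒞 ≤ cellularity X :=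
  csInf_mem (s := {κ | ℵ₀ ≤ κ ∧ ∀ 𝒞 : Set (Set X),
      (∀ U ∈ 𝒞, IsOpen U ∧ U.Nonempty) → 𝒞.PairwiseDisjoint id → #𝒞 ≤ κ})
    ⟨_, le_max_left ℵ₀ #(Set X), fun 𝒞 _ _ => (mk_set_le 𝒞).trans (le_max_right _ _)⟩

theorem Quasiregular.dense_of_forall_pairwiseDisjoint (hX : Quasiregular X)
    {𝒱 : X → Set (Set X)} (h𝒱 : ∀ x, IsLocalPiBase X x (𝒱 x)) {D : Set X}
    (hD : ∀ 𝒢 ⊆ ⋃ x ∈ D, 𝒱 x, 𝒢.PairwiseDisjoint id → (closure (⋃₀ 𝒢))ᶜ.Nonempty →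
      (D ∩ (closure (⋃₀ 𝒢))ᶜ).Nonempty) :
    Dense D := by
  by_contra hnd
  obtain ⟨V, hVo, hVne, hVD⟩ := hX _ isClosed_closure.isOpen_compl
    (nonempty_compl.2 (mt dense_iff_closure_eq.2 hnd))
  obtain ⟨𝒢, ⟨h𝒢sub, h𝒢disj⟩, h𝒢max⟩ :=
    exists_maximal_pairwiseDisjoint_subset {P ∈ ⋃ x ∈ D, 𝒱 x | Disjoint P (closure V)} id
  have hV𝒢 : Disjoint V (closure (⋃₀ 𝒢)) :=
    (disjoint_sUnion_right.2 fun G hG =>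
      ((h𝒢sub hG).2.mono_right subset_closure).symm).closure_right hVo
  obtain ⟨d, hdD, hd𝒢⟩ :=
    hD 𝒢 (fun G hG => (h𝒢sub hG).1) h𝒢disj (hVne.mono hV𝒢.subset_compl_right)
  have hdV : d ∉ closure V := fun h => hVD h (subset_closure hdD)
  obtain ⟨P, hP, hPsub⟩ := (h𝒱 d).2 _
    (isClosed_closure.isOpen_compl.inter isClosed_closure.isOpen_compl) ⟨hd𝒢, hdV⟩
  have hP𝒢 : Disjoint P (⋃₀ 𝒢) :=
    subset_compl_iff_disjoint_right.1 ((hPsub.trans inter_subset_left).trans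
      (compl_subset_compl.2 subset_closure))
  have hPmem : P ∈ 𝒢 := h𝒢max ⟨insert_subset ⟨mem_biUnion hdD hP,
      subset_compl_iff_disjoint_right.1 (hPsub.trans inter_subset_right)⟩ h𝒢sub,
    h𝒢disj.insert fun G hG _ => hP𝒢.mono_right (subset_sUnion_of_mem hG)⟩
    (subset_insert _ _) (mem_insert _ _)
  obtain ⟨p, hp⟩ := ((h𝒱 d).1 P hP).2
  exact disjoint_left.1 hP𝒢 hp (mem_sUnion_of_mem hp hPmem)

end Topology

/-- If `X` is quasiregular then `d(X) ≤ πχ(X)^(c(X))`. -/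
theorem stmt_4 (X : Type u) [TopologicalSpace X] (hX : Quasiregular X) :
    dens X ≤ piChar X ^ cellularity X := by
  rcases isEmpty_or_nonempty X with hX₀ | hX₀
  · exact (dens_le_mk (D := ∅) (by simp [Dense])).trans (by simp)
  choose 𝒱 h𝒱 h𝒱card using exists_isLocalPiBase_mk_le_piChar (X := X)
  obtain ⟨D, hDcard, hD⟩ := exists_mk_le_power_forall_inter_nonempty aleph0_le_piChar
    (cellularity_spec (X := X)).1 𝒱 (fun x => (h𝒱 x).nonempty) h𝒱card fun 𝒢 => (closure (⋃₀ 𝒢))ᶜ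
  refine (dens_le_mk (hX.dense_of_forall_pairwiseDisjoint h𝒱 fun 𝒢 h𝒢 h𝒢disj => ?_)).trans hDcard
  refine hD 𝒢 h𝒢 (cellularity_spec.2 𝒢 (fun G hG => ?_) h𝒢disj)
  obtain ⟨x, -, hx⟩ := mem_iUnion₂.1 (h𝒢 hG)
  exact (h𝒱 x).1 G hx
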